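/- Let p ≡ 3 (mod 4) be a prime and let s be a binary sequence of period p whose support set is a (p, (p+1)/2, (p+1)/4) cyclic difference set. Let A be the circulant matrix of s. Then gcd(2^p - 1, det(A)) = 1, and hence the 2-adic complexity of s equals p. -/

import Mathlib

open Matrix Finset

/-!
Since the support of `s` is a `(p, 2L, L)` difference set with `4L = p + 1`, the circulant matrix
satisfies `A Aᵀ = L (I + J)`, so `(det A)² = L^p (p + 1)` and every prime factor of `det A` is at
most `p + 1`. A prime `q ∣ 2^p - 1` has `2` of order `p` modulo `q`, so `p ∣ q - 1`; as `q` is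
odd, `q ≠ p + 1`, hence `q > p + 1`. For the second claim: if `q` divides both `∑ sᵢ 2^i` and
`2^p - 1`, then `(2^(-j))_j` is a kernel vector of `A` modulo `q`, so `q ∣ det A`.
-/

lemma ZMod.two_pow_eq_one_of_dvd {p q : ℕ} (h : (q : ℤ) ∣ 2 ^ p - 1) :
    (2 : ZMod q) ^ p = 1 := by
  have h0 := (ZMod.intCast_zmod_eq_zero_iff_dvd _ q).mpr h
  push_cast at h0
  exact sub_eq_zero.mp h0

lemma dvd_sub_one_of_two_pow_eq_one {p q : ℕ} [Fact q.Prime] (hp : p.Prime)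
    (h : (2 : ZMod q) ^ p = 1) : p ∣ q - 1 := by
  have := Fact.mk hp
  have h2 : (2 : ZMod q) ≠ 0 := by
    rintro h0
    simp [h0, hp.ne_zero] at h
  have h1 : (2 : ZMod q) ≠ 1 := fun h21 =>
    one_ne_zero (by linear_combination h21 : (1 : ZMod q) = 0)
  rw [← orderOf_eq_prime h h1]
  exact ZMod.orderOf_dvd_card_sub_one h2

lemma coprime_two_pow_sub_one_add_one {p : ℕ} (hp : p.Prime) (hodd : Odd p) :
    Nat.Coprime (2 ^ p - 1) (p + 1) := by
  refine Nat.coprime_of_dvd fun q hq hqM hqp => ?_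
  have := Fact.mk hq
  have hqM' : (q : ℤ) ∣ 2 ^ p - 1 := by
    simpa [Nat.one_le_two_pow] using Int.natCast_dvd_natCast.mpr hqM
  have hq2 := hq.two_le
  have hpq := Nat.le_of_dvd (by omega)
    (dvd_sub_one_of_two_pow_eq_one hp (ZMod.two_pow_eq_one_of_dvd hqM'))
  have hq_eq : q = p + 1 := le_antisymm (Nat.le_of_dvd (by omega) hqp) (by omega)
  have := hq.even_iff.mp (hq_eq ▸ hodd.add_one)
  have := hp.two_le
  omega

lemma isCoprime_two_pow_sub_one_of_dvd_pow {p k : ℕ} (hp : p.Prime) (hodd : Odd p) {d : ℤ}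
    (hd : d ∣ (p + 1) ^ k) : IsCoprime (2 ^ p - 1 : ℤ) d := by
  have h := Nat.isCoprime_iff_coprime.mpr (coprime_two_pow_sub_one_add_one hp hodd)
  push_cast [Nat.one_le_two_pow] at h
  exact h.pow_right.of_isCoprime_of_dvd_right hd

section DifferenceSet

variable {G : Type*} [AddCommGroup G] [Fintype G]

lemma circulant_mul_transpose_apply {R : Type*} [CommSemiring R] (s : G → R) (i j : G) :
    (circulant s * (circulant s)ᵀ) i j = ∑ n, s n * s (n - (i - j)) := by
  simp only [mul_apply, transpose_apply, circulant_apply]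
  refine Fintype.sum_equiv (Equiv.subLeft i) _ _ fun k => ?_
  simp only [Equiv.subLeft_apply]
  congr 2
  abel

variable [DecidableEq G] {D : Finset G} {s : G → ℤ}

lemma sum_mul_sub_eq_card_inter (hs : ∀ i, s i = if i ∈ D then 1 else 0) (τ : G) :
    ∑ n, s n * s (n - τ) = #(D ∩ D.image (· + τ)) := by
  have hmem : ∀ n, n - τ ∈ D ↔ n ∈ D.image (· + τ) := fun n =>
    ⟨fun h => mem_image.mpr ⟨n - τ, h, by abel⟩,
      fun h => by obtain ⟨x, hx, rfl⟩ := mem_image.mp h; simpa using hx⟩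
  simp only [hs, hmem, mul_ite, mul_one, mul_zero, ← ite_and, ← mem_inter, sum_boole]
  rw [filter_mem_eq_inter, univ_inter, inter_comm]

lemma circulant_mul_transpose_eq (hs : ∀ i, s i = if i ∈ D then 1 else 0) {k l : ℕ}
    (hk : #D = k) (hl : ∀ τ : G, τ ≠ 0 → #(D ∩ D.image (· + τ)) = l) :
    circulant s * (circulant s)ᵀ = ((k : ℤ) - l) • (1 : Matrix G G ℤ) + (l : ℤ) •
      (replicateCol Unit (1 : G → ℤ) * replicateRow Unit (1 : G → ℤ) : Matrix G G ℤ) := by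
  ext i j
  rw [circulant_mul_transpose_apply, sum_mul_sub_eq_card_inter hs]
  simp only [Matrix.add_apply, Matrix.smul_apply, one_apply, mul_apply, replicateCol_apply,
    replicateRow_apply, Pi.one_apply, mul_one, Finset.univ_unique, sum_singleton, smul_eq_mul]
  by_cases hij : i = j
  · rw [if_pos hij, hij, sub_self]
    simp [hk]
  · rw [if_neg hij, hl _ (sub_ne_zero.mpr hij)]
    ring

lemma det_circulant_sq (hs : ∀ i, s i = if i ∈ D then 1 else 0) {l : ℕ}
    (hk : #D = 2 * l) (hl : ∀ τ : G, τ ≠ 0 → #(D ∩ D.image (· + τ)) = l) :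
    (circulant s).det ^ 2 = l ^ Fintype.card G * (Fintype.card G + 1) := by
  have h := congrArg det (circulant_mul_transpose_eq hs hk hl)
  rw [det_mul, det_transpose, ← sq] at h
  rw [h, Nat.cast_mul, Nat.cast_ofNat, show (2 * l - l : ℤ) = l by ring, ← smul_add, det_smul,
    det_one_add_replicateCol_mul_replicateRow]
  simp [dotProduct, add_comm]

end DifferenceSet

section RootOfUnity

variable {R : Type*} [CommRing R] {n : ℕ} [NeZero n] {ζ : R}

lemma pow_val_add (hζ : ζ ^ n = 1) (a b : ZMod n) :
    ζ ^ (a + b).val = ζ ^ a.val * ζ ^ b.val := by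
  rw [ZMod.val_add, ← pow_eq_pow_mod _ hζ, pow_add]

lemma circulant_mulVec_pow_val_neg (s : ZMod n → R) (hζ : ζ ^ n = 1) :
    circulant s *ᵥ (fun j => ζ ^ (-j).val)
      = (∑ m, s m * ζ ^ m.val) • fun j => ζ ^ (-j).val := by
  ext i
  simp only [mulVec, dotProduct, circulant_apply, Pi.smul_apply, smul_eq_mul, sum_mul]
  refine Fintype.sum_equiv (Equiv.subLeft i) _ _ fun j => ?_
  rw [Equiv.subLeft_apply, mul_assoc, ← pow_val_add hζ, show i - j + -i = -j by abel]

lemma det_circulant_eq_zero_of_sum_pow_val [IsDomain R] (s : ZMod n → R) (hζ : ζ ^ n = 1)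
    (h : ∑ m, s m * ζ ^ m.val = 0) : (circulant s).det = 0 :=
  exists_mulVec_eq_zero_iff.mp ⟨fun j => ζ ^ (-j).val, fun h0 => by simpa using congrFun h0 0,
    by rw [circulant_mulVec_pow_val_neg s hζ, h, zero_smul]⟩

end RootOfUnity

lemma ZMod.sum_val_eq_sum_range {M : Type*} [AddCommMonoid M] {n : ℕ} [NeZero n] (f : ℕ → M) :
    ∑ m : ZMod n, f m.val = ∑ i ∈ range n, f i :=
  sum_nbij' ZMod.val Nat.cast (fun a _ => mem_range.mpr a.val_lt) (fun _ _ => mem_univ _)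
    (fun a _ => ZMod.natCast_zmod_val a) (fun _ hi => ZMod.val_cast_of_lt (mem_range.mp hi))
    fun _ _ => rfl

lemma prime_dvd_det_circulant {n q : ℕ} [NeZero n] [Fact q.Prime] (s : ZMod n → ℤ)
    (hM : (q : ℤ) ∣ 2 ^ n - 1) (hN : (q : ℤ) ∣ ∑ i ∈ range n, s i * 2 ^ i) :
    (q : ℤ) ∣ (circulant s).det := by
  rw [← ZMod.intCast_zmod_eq_zero_iff_dvd] at hN ⊢
  rw [Int.cast_det, map_circulant]
  refine det_circulant_eq_zero_of_sum_pow_val _ (ZMod.two_pow_eq_one_of_dvd hM) ?_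
  push_cast at hN
  rw [← hN, ← ZMod.sum_val_eq_sum_range]
  simp

theorem stmt7 (p : ℕ) (hp : p.Prime) (hp4 : p % 4 = 3) [NeZero p]
    (s : ZMod p → ℤ) (hbin : ∀ i, s i = 0 ∨ s i = 1)
    (hcard : (Finset.univ.filter fun i : ZMod p => s i = 1).card = (p + 1) / 2)
    (hdiff : ∀ τ : ZMod p, τ ≠ 0 →
      ((Finset.univ.filter fun i : ZMod p => s i = 1) ∩
        ((Finset.univ.filter fun i : ZMod p => s i = 1)).image (· + τ)).card = (p + 1) / 4) :
    Int.gcd (2 ^ p - 1) (Matrix.circulant s).det = 1 ∧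
    Int.gcd (∑ i ∈ Finset.range p, s (i : ZMod p) * 2 ^ i) (2 ^ p - 1) = 1 := by
  obtain ⟨l, hl⟩ : ∃ l, p + 1 = 4 * l := ⟨(p + 1) / 4, by omega⟩
  have hs : ∀ i, s i = if i ∈ univ.filter fun i => s i = 1 then 1 else 0 := fun i => by
    rcases hbin i with h | h <;> simp [h]
  have hdet : (circulant s).det ^ 2 = l ^ p * (p + 1) := by
    simpa only [ZMod.card] using
      det_circulant_sq hs (by rw [hcard]; omega) fun τ hτ => (hdiff τ hτ).trans (by omega)
  have hcop : IsCoprime (2 ^ p - 1 : ℤ) (circulant s).det :=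
    isCoprime_two_pow_sub_one_of_dvd_pow hp (Nat.odd_iff.mpr (by omega)) <|
      calc (circulant s).det ∣ (circulant s).det ^ 2 := dvd_pow_self _ two_ne_zero
        _ = l ^ p * (p + 1) := hdet
        _ ∣ (p + 1) ^ p * (p + 1) :=
          mul_dvd_mul_right (pow_dvd_pow_of_dvd ⟨4, by omega⟩ p) _
        _ = (p + 1) ^ (p + 1) := (pow_succ _ _).symm
  refine ⟨Int.isCoprime_iff_gcd_eq_one.mp hcop, Nat.coprime_of_dvd fun q hq hqN hqM => ?_⟩
  have := Fact.mk hq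
  have hqM' : (q : ℤ) ∣ 2 ^ p - 1 := Int.natCast_dvd.mpr hqM
  exact (Nat.prime_iff_prime_int.mp hq).not_isUnit <|
    hcop.isUnit_of_dvd' hqM' (prime_dvd_det_circulant s hqM' (Int.natCast_dvd.mpr hqN))
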